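/- Let 0 < α < 1 and n ∈ ℕ with n^{1−α} > 2, and let f : ℝ → ℝ be continuous and bounded. Then for every x ∈ ℝ, |Ā_n(f)(x) − f(x)| ≤ ω(f, 1/n + 1/n^α) + 2(q + 1/q)‖f‖_∞ / B^{β(n^{1−α} − 1)}, and hence ‖Ā_n(f) − f‖_∞ is bounded by the same quantity. Consequently, if f is in addition uniformly continuous, then Ā_n(f) → f uniformly on ℝ as n → ∞. -/

import Mathlib

open MeasureTheory Real Filter Set Topology

noncomputable def nu (B q β x : ℝ) : ℝ := 1 / (1 + q * B ^ (-(β * x)))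

noncomputable def G (B q β x : ℝ) : ℝ := (nu B q β (x + 1) - nu B q β (x - 1)) / 2

noncomputable def Psi (B q β x : ℝ) : ℝ := (G B q β x + G B (1 / q) β x) / 2

noncomputable def modCont (f : ℝ → ℝ) (θ : ℝ) : ℝ :=
  sSup {d : ℝ | ∃ x y : ℝ, |x - y| ≤ θ ∧ d = |f x - f y|}

noncomputable def supNorm (f : ℝ → ℝ) : ℝ := ⨆ x : ℝ, |f x|

noncomputable def opA (B q β : ℝ) (n : ℕ) (f : ℝ → ℝ) (x : ℝ) : ℝ :=
  ∫ v : ℝ, f (v / n) * Psi B q β (n * x - v)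

noncomputable def opAStar (B q β : ℝ) (n : ℕ) (f : ℝ → ℝ) (x : ℝ) : ℝ :=
  (n : ℝ) * ∫ v : ℝ, (∫ h in (v / n)..((v + 1) / n), f h) * Psi B q β (n * x - v)

noncomputable def opABar (B q β : ℝ) (r : ℕ) (w : ℕ → ℝ) (n : ℕ) (f : ℝ → ℝ) (x : ℝ) : ℝ :=
  ∫ v : ℝ, (∑ s ∈ Finset.Icc 1 r, w s * f (v / n + (s : ℝ) / ((n : ℝ) * (r : ℝ)))) *
    Psi B q β (n * x - v)


lemma nu_eq {B q β : ℝ} (hB : 1 < B) (hq : 0 < q) (x : ℝ) :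
    nu B q β x = exp (β * log B * x) / (exp (β * log B * x) + q) := by
  have hB0 : (0:ℝ) < B := lt_trans one_pos hB
  have hE : (0:ℝ) < exp (β * log B * x) := exp_pos _
  rw [nu, rpow_def_of_pos hB0]
  rw [show log B * -(β * x) = -(β * log B * x) by ring, exp_neg]
  rw [show 1 + q * (exp (β * log B * x))⁻¹ = (exp (β * log B * x) + q) / exp (β * log B * x) by
    field_simp]
  rw [one_div_div]

lemma nu_mono {B q β : ℝ} (hB : 1 < B) (hq : 0 < q) (hβ : 0 < β) :
    Monotone (nu B q β) := by
  intro x y hxy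
  rw [nu_eq hB hq, nu_eq hB hq]
  have hc : 0 < β * log B := mul_pos hβ (log_pos hB)
  have h1 : exp (β * log B * x) ≤ exp (β * log B * y) :=
    exp_le_exp.2 (by nlinarith)
  have e1 : ∀ z : ℝ, exp (β * log B * z) / (exp (β * log B * z) + q)
      = 1 - q / (exp (β * log B * z) + q) := by
    intro z
    have := (exp_pos (β * log B * z))
    field_simp
    ring
  rw [e1, e1]
  have h2 : q / (exp (β * log B * y) + q) ≤ q / (exp (β * log B * x) + q) := by
    apply div_le_div_of_nonneg_left hq.le (by positivity) (by linarith)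
  linarith

lemma nu_nonneg {B q β : ℝ} (hB : 1 < B) (hq : 0 < q) (x : ℝ) : 0 ≤ nu B q β x := by
  rw [nu_eq hB hq]; positivity

lemma nu_le_one {B q β : ℝ} (hB : 1 < B) (hq : 0 < q) (x : ℝ) : nu B q β x ≤ 1 := by
  rw [nu_eq hB hq]
  rw [div_le_one (by positivity)]
  linarith [exp_pos (β * log B * x)]

lemma one_sub_nu_le {B q β : ℝ} (hB : 1 < B) (hq : 0 < q) (x : ℝ) :
    1 - nu B q β x ≤ q * exp (-(β * log B * x)) := by
  rw [nu_eq hB hq, exp_neg]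
  have hE : (0:ℝ) < exp (β * log B * x) := exp_pos _
  rw [show 1 - exp (β * log B * x) / (exp (β * log B * x) + q)
      = q / (exp (β * log B * x) + q) by field_simp; ring]
  rw [div_le_iff₀ (by positivity)]
  rw [mul_comm q _, mul_assoc]
  have : (1:ℝ) ≤ (exp (β * log B * x))⁻¹ * (exp (β * log B * x) + q) := by
    rw [le_inv_mul_iff₀ hE, mul_one]; linarith
  nlinarith [this, hq.le]

lemma nu_le_exp {B q β : ℝ} (hB : 1 < B) (hq : 0 < q) (x : ℝ) :
    nu B q β x ≤ (1/q) * exp (β * log B * x) := by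
  rw [nu_eq hB hq]
  have hE : (0:ℝ) < exp (β * log B * x) := exp_pos _
  rw [div_le_iff₀ (by positivity)]
  rw [show 1/q * exp (β * log B * x) * (exp (β * log B * x) + q)
      = exp (β * log B * x) * ((exp (β * log B * x) + q)/q) by ring]
  nlinarith [div_nonneg (by linarith : (0:ℝ) ≤ exp (β * log B * x) + q) hq.le,
    (by rw [le_div_iff₀ hq]; nlinarith : (1:ℝ) ≤ (exp (β * log B * x) + q)/q)]

lemma nu_neg {B q β : ℝ} (hB : 1 < B) (hq : 0 < q) (x : ℝ) :
    nu B q β (-x) = 1 - nu B (1/q) β x := by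
  rw [nu_eq hB hq, nu_eq hB (by positivity : (0:ℝ) < 1/q)]
  have hE : (0:ℝ) < exp (β * log B * x) := exp_pos _
  have hE' : exp (β * log B * -x) = (exp (β * log B * x))⁻¹ := by
    rw [← exp_neg]; ring_nf
  rw [hE']
  field_simp
  ring

lemma nu_continuous {B q β : ℝ} (hB : 1 < B) (hq : 0 < q) :
    Continuous (nu B q β) := by
  have : (nu B q β) = fun x => exp (β * log B * x) / (exp (β * log B * x) + q) := by
    funext x; exact nu_eq hB hq x
  rw [this]
  apply Continuous.div
  · exact (continuous_const.mul continuous_id).rexp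
  · exact ((continuous_const.mul continuous_id).rexp).add continuous_const
  · intro x; positivity


lemma G_nonneg {B q β : ℝ} (hB : 1 < B) (hq : 0 < q) (hβ : 0 < β) (x : ℝ) :
    0 ≤ G B q β x := by
  have := nu_mono hB hq hβ (show x - 1 ≤ x + 1 by linarith)
  rw [G]; linarith

lemma G_neg {B q β : ℝ} (hB : 1 < B) (hq : 0 < q) (x : ℝ) :
    G B q β (-x) = G B (1/q) β x := by
  rw [G, G, show -x + 1 = -(x-1) by ring, show -x - 1 = -(x+1) by ring,
    nu_neg hB hq, nu_neg hB hq]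
  ring

lemma Psi_neg {B q β : ℝ} (hB : 1 < B) (hq : 0 < q) (x : ℝ) :
    Psi B q β (-x) = Psi B q β x := by
  have hq' : (0:ℝ) < 1/q := by positivity
  rw [Psi, Psi, G_neg hB hq, G_neg hB hq', one_div_one_div]
  ring

lemma Psi_nonneg {B q β : ℝ} (hB : 1 < B) (hq : 0 < q) (hβ : 0 < β) (x : ℝ) :
    0 ≤ Psi B q β x := by
  have h1 := G_nonneg hB hq hβ x
  have h2 := G_nonneg hB (by positivity : (0:ℝ) < 1/q) hβ x
  rw [Psi]; linarith

lemma G_le {B q β : ℝ} (hB : 1 < B) (hq : 0 < q) (hβ : 0 < β) (x : ℝ) :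
    G B q β x ≤ (q * exp (β * log B) / 2) * exp (-(β * log B * x)) := by
  have h1 : G B q β x ≤ (1 - nu B q β (x - 1)) / 2 := by
    rw [G]
    have := nu_le_one (β := β) hB hq (x+1)
    linarith
  refine h1.trans ?_
  have h2 := one_sub_nu_le (β := β) hB hq (x - 1)
  have : q * exp (-(β * log B * (x-1))) = q * exp (β * log B) * exp (-(β * log B * x)) := by
    rw [show -(β * log B * (x-1)) = β * log B + -(β * log B * x) by ring, exp_add]; ring
  rw [this] at h2
  linarith

lemma Psi_le {B q β : ℝ} (hB : 1 < B) (hq : 0 < q) (hβ : 0 < β) (x : ℝ) :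
    Psi B q β x ≤ ((q + 1/q) * exp (β * log B) / 4) * exp (-(β * log B * x)) := by
  have h1 := G_le hB hq hβ x
  have h2 := G_le (β := β) hB (by positivity : (0:ℝ) < 1/q) hβ x
  have he : (0:ℝ) < exp (-(β * log B * x)) := exp_pos _
  have he2 : (0:ℝ) < exp (β * log B) := exp_pos _
  rw [Psi]
  nlinarith

lemma G_continuous {B q β : ℝ} (hB : 1 < B) (hq : 0 < q) : Continuous (G B q β) := by
  have h := nu_continuous (B := B) (q := q) (β := β) hB hq
  exact (((h.comp (continuous_id.add continuous_const)).sub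
    (h.comp (continuous_id.sub continuous_const))).div_const 2)

lemma Psi_continuous {B q β : ℝ} (hB : 1 < B) (hq : 0 < q) : Continuous (Psi B q β) := by
  exact ((G_continuous hB hq).add (G_continuous hB (by positivity))).div_const 2


lemma u_integrableOn_Ioi {B q β : ℝ} (hB : 1 < B) (hq : 0 < q) (hβ : 0 < β) (a : ℝ) :
    IntegrableOn (fun x => 1 - nu B q β x) (Ioi a) := by
  have hc : 0 < β * log B := mul_pos hβ (log_pos hB)
  have hg : IntegrableOn (fun x => q * exp (-(β * log B * x))) (Ioi a) := by
    have := (exp_neg_integrableOn_Ioi a hc)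
    simpa [mul_assoc, IntegrableOn] using this.const_mul q
  refine hg.mono' ?_ ?_
  · exact ((continuous_const.sub (nu_continuous hB hq)).aestronglyMeasurable).restrict
  · filter_upwards with x
    have h1 := nu_le_one (β := β) hB hq x
    have h2 := one_sub_nu_le (β := β) hB hq x
    rw [Real.norm_eq_abs, abs_of_nonneg (by linarith)]
    exact h2

lemma shift_Ioi {B q β : ℝ} (d T : ℝ) :
    ∫ x in Ioi T, (1 - nu B q β (x + d)) = ∫ x in Ioi (T + d), (1 - nu B q β x) := by
  have mp : MeasurePreserving (fun x : ℝ => x + d) volume volume :=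
    measurePreserving_add_right volume d
  have emb : MeasurableEmbedding (fun x : ℝ => x + d) :=
    (MeasurableEquiv.addRight d).measurableEmbedding
  have hpre : (fun x : ℝ => x + d) ⁻¹' (Ioi (T + d)) = Ioi T := by
    ext x; simp [Set.mem_Ioi]
  rw [← hpre]
  exact mp.setIntegral_preimage_emb emb (fun x => 1 - nu B q β x) (Ioi (T + d))

lemma u_shift_integrableOn {B q β : ℝ} (hB : 1 < B) (hq : 0 < q) (hβ : 0 < β) (d T : ℝ) :
    IntegrableOn (fun x => 1 - nu B q β (x + d)) (Ioi T) := by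
  have mp : MeasurePreserving (fun x : ℝ => x + d) volume volume :=
    measurePreserving_add_right volume d
  have emb : MeasurableEmbedding (fun x : ℝ => x + d) :=
    (MeasurableEquiv.addRight d).measurableEmbedding
  have hpre : (fun x : ℝ => x + d) ⁻¹' (Ioi (T + d)) = Ioi T := by
    ext x; simp [Set.mem_Ioi]
  have := (mp.integrableOn_comp_preimage emb (f := fun x => 1 - nu B q β x)
    (s := Ioi (T + d))).mpr (u_integrableOn_Ioi hB hq hβ (T + d))
  rw [hpre] at this
  exact this

lemma G_integral_Ioi {B q β : ℝ} (hB : 1 < B) (hq : 0 < q) (hβ : 0 < β) (T : ℝ) :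
    ∫ x in Ioi T, G B q β x = (∫ x in Ioc (T - 1) (T + 1), (1 - nu B q β x)) / 2 := by
  have h1 := u_shift_integrableOn hB hq hβ (-1) T
  have h2 := u_shift_integrableOn hB hq hβ 1 T
  have hGu : ∀ x : ℝ, G B q β x
      = ((1 - nu B q β (x + (-1))) - (1 - nu B q β (x + 1))) / 2 := by
    intro x; rw [G, show x + (-1) = x - 1 by ring]; ring
  calc ∫ x in Ioi T, G B q β x
      = ∫ x in Ioi T, ((1 - nu B q β (x + (-1))) - (1 - nu B q β (x + 1))) / 2 := by
        simp_rw [hGu]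
    _ = ((∫ x in Ioi T, (1 - nu B q β (x + (-1))))
          - ∫ x in Ioi T, (1 - nu B q β (x + 1))) / 2 := by
        rw [integral_div, integral_sub h1 h2]
    _ = ((∫ x in Ioi (T - 1), (1 - nu B q β x))
          - ∫ x in Ioi (T + 1), (1 - nu B q β x)) / 2 := by
        rw [shift_Ioi, shift_Ioi, show T + (-1) = T - 1 by ring]
    _ = (∫ x in Ioc (T - 1) (T + 1), (1 - nu B q β x)) / 2 := by
        have hsplit : ∫ x in Ioi (T - 1), (1 - nu B q β x)
            = (∫ x in Ioc (T - 1) (T + 1), (1 - nu B q β x))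
              + ∫ x in Ioi (T + 1), (1 - nu B q β x) := by
          rw [← setIntegral_union (Ioc_disjoint_Ioi le_rfl) measurableSet_Ioi
            ((u_integrableOn_Ioi hB hq hβ (T - 1)).mono_set Ioc_subset_Ioi_self)
            (u_integrableOn_Ioi hB hq hβ (T + 1)),
            Ioc_union_Ioi_eq_Ioi (by linarith : T - 1 ≤ T + 1)]
        rw [hsplit]; ring

lemma G_tail {B q β : ℝ} (hB : 1 < B) (hq : 0 < q) (hβ : 0 < β) (T : ℝ) :
    ∫ x in Ioi T, G B q β x ≤ q * exp (-(β * log B * (T - 1))) := by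
  rw [G_integral_Ioi hB hq hβ]
  have hc : 0 < β * log B := mul_pos hβ (log_pos hB)
  have hmono : ∀ x ∈ Ioc (T - 1) (T + 1),
      1 - nu B q β x ≤ q * exp (-(β * log B * (T - 1))) := by
    intro x hx
    refine (one_sub_nu_le (β := β) hB hq x).trans ?_
    have : -(β * log B * x) ≤ -(β * log B * (T - 1)) := by nlinarith [hx.1.le]
    exact mul_le_mul_of_nonneg_left (exp_le_exp.2 this) hq.le
  have hint : ∫ x in Ioc (T - 1) (T + 1), (1 - nu B q β x)
      ≤ ∫ _x in Ioc (T - 1) (T + 1), q * exp (-(β * log B * (T - 1))) := by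
    refine setIntegral_mono_on
      ((u_integrableOn_Ioi hB hq hβ (T - 1)).mono_set Ioc_subset_Ioi_self)
      (integrableOn_const measure_Ioc_lt_top.ne) measurableSet_Ioc hmono
  have hconst : ∫ _x in Ioc (T - 1) (T + 1), q * exp (-(β * log B * (T - 1)))
      = 2 * (q * exp (-(β * log B * (T - 1)))) := by
    rw [setIntegral_const, Real.volume_real_Ioc_of_le (by linarith),
      show T + 1 - (T - 1) = 2 by ring]
    norm_num
  rw [hconst] at hint
  linarith [hint]

lemma Psi_integrableOn_Ioi {B q β : ℝ} (hB : 1 < B) (hq : 0 < q) (hβ : 0 < β) (a : ℝ) :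
    IntegrableOn (Psi B q β) (Ioi a) := by
  have hc : 0 < β * log B := mul_pos hβ (log_pos hB)
  have hg : IntegrableOn
      (fun x => ((q + 1/q) * exp (β * log B) / 4) * exp (-(β * log B * x))) (Ioi a) := by
    have := (exp_neg_integrableOn_Ioi a hc)
    simpa [mul_assoc, IntegrableOn] using this.const_mul ((q + 1/q) * exp (β * log B) / 4)
  refine hg.mono' ((Psi_continuous hB hq).aestronglyMeasurable).restrict ?_
  filter_upwards with x
  rw [Real.norm_eq_abs, abs_of_nonneg (Psi_nonneg hB hq hβ x)]
  exact Psi_le hB hq hβ x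

lemma Psi_integrable {B q β : ℝ} (hB : 1 < B) (hq : 0 < q) (hβ : 0 < β) :
    Integrable (Psi B q β) := by
  have hIoi := Psi_integrableOn_Ioi hB hq hβ 0
  have hIic : IntegrableOn (Psi B q β) (Iic 0) := by
    have mp : MeasurePreserving (fun x : ℝ => -x) volume volume :=
      Measure.measurePreserving_neg volume
    have emb : MeasurableEmbedding (fun x : ℝ => -x) :=
      (Homeomorph.neg ℝ).measurableEmbedding
    have hpre : (fun x : ℝ => -x) ⁻¹' (Ici (0:ℝ)) = Iic 0 := by
      ext x; simp
    have := (mp.integrableOn_comp_preimage emb (f := Psi B q β)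
      (s := Ici (0:ℝ))).mpr ((integrableOn_Ici_iff_integrableOn_Ioi (f := Psi B q β)).mpr hIoi)
    rw [hpre] at this
    refine this.congr_fun (fun x _ => (Psi_neg hB hq x)) measurableSet_Iic
  have : IntegrableOn (Psi B q β) (Iic 0 ∪ Ioi 0) := hIic.union hIoi
  rwa [Iic_union_Ioi, integrableOn_univ] at this

lemma Psi_integral_one {B q β : ℝ} (hB : 1 < B) (hq : 0 < q) (hβ : 0 < β) :
    ∫ x, Psi B q β x = 1 := by
  have hq' : (0:ℝ) < 1/q := by positivity
  have hint := Psi_integrable hB hq hβ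
  have hsplit : (∫ x in Iic (0:ℝ), Psi B q β x) + ∫ x in Ioi (0:ℝ), Psi B q β x
      = ∫ x, Psi B q β x := by
    have := integral_add_compl (measurableSet_Iic (a := (0:ℝ))) hint
    rwa [compl_Iic] at this
  have hIic : ∫ x in Iic (0:ℝ), Psi B q β x = ∫ x in Ioi (0:ℝ), Psi B q β x := by
    rw [show (Ioi (0:ℝ)) = Ioi (-0 : ℝ) by norm_num, ← integral_comp_neg_Iic]
    exact setIntegral_congr_fun measurableSet_Iic (fun x _ => (Psi_neg hB hq x).symm)
  -- compute ∫ x in Ioi 0, Psi = 1/2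
  have hG1 := G_integral_Ioi hB hq hβ 0
  have hG2 := G_integral_Ioi hB hq' hβ 0
  have hiv : ∀ q0 : ℝ, (∫ x in Ioc (0 - 1) (0 + 1), (1 - nu B q0 β x))
      = ∫ x in (-1 : ℝ)..1, (1 - nu B q0 β x) := by
    intro q0
    rw [intervalIntegral.integral_of_le (by norm_num : (-1:ℝ) ≤ 1)]
    norm_num
  have huv : (∫ x in (-1:ℝ)..1, (1 - nu B (1/q) β x)) = ∫ x in (-1:ℝ)..1, nu B q β x := by
    have : ∀ x : ℝ, 1 - nu B (1/q) β x = nu B q β (-x) := fun x => by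
      rw [nu_neg hB hq x]
    simp_rw [this]
    rw [intervalIntegral.integral_comp_neg (fun x => nu B q β x)]
    norm_num
  have hsum : (∫ x in (-1:ℝ)..1, (1 - nu B q β x)) + ∫ x in (-1:ℝ)..1, nu B q β x = 2 := by
    rw [← intervalIntegral.integral_add
      (Continuous.intervalIntegrable (u := fun x => 1 - nu B q β x) ((continuous_const.sub (nu_continuous hB hq))) _ _)
      ((nu_continuous hB hq).intervalIntegrable _ _)]
    simp
    norm_num
  have hGint : ∀ q0 : ℝ, 0 < q0 → IntegrableOn (G B q0 β) (Ioi (0:ℝ)) := by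
    intro q0 hq0
    have h1 := u_shift_integrableOn hB hq0 hβ (-1) 0
    have h2 := u_shift_integrableOn hB hq0 hβ 1 0
    have : IntegrableOn (fun x =>
        ((1 - nu B q0 β (x + (-1))) - (1 - nu B q0 β (x + 1))) / 2) (Ioi (0:ℝ)) :=
      (h1.sub h2).div_const 2
    refine this.congr_fun (fun x _ => ?_) measurableSet_Ioi
    dsimp only; rw [G, show x + (-1) = x - 1 by ring]; ring
  have hIoiPsi : ∫ x in Ioi (0:ℝ), Psi B q β x = 1/2 := by
    have hunf : ∫ x in Ioi (0:ℝ), Psi B q β x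
        = ((∫ x in Ioi (0:ℝ), G B q β x) + ∫ x in Ioi (0:ℝ), G B (1/q) β x) / 2 := by
      simp only [Psi]
      rw [integral_div, integral_add (hGint q hq) (hGint (1/q) hq')]
    rw [hunf, hG1, hG2, hiv, hiv, huv]
    linarith [hsum]
  linarith [hsplit, hIic, hIoiPsi]

lemma G_integrableOn_Ioi {B q β : ℝ} (hB : 1 < B) (hq : 0 < q) (hβ : 0 < β) (a : ℝ) :
    IntegrableOn (G B q β) (Ioi a) := by
  have h1 := u_shift_integrableOn hB hq hβ (-1) a
  have h2 := u_shift_integrableOn hB hq hβ 1 a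
  have : IntegrableOn (fun x =>
      ((1 - nu B q β (x + (-1))) - (1 - nu B q β (x + 1))) / 2) (Ioi a) :=
    (h1.sub h2).div_const 2
  refine this.congr_fun (fun x _ => ?_) measurableSet_Ioi
  dsimp only; rw [G, show x + (-1) = x - 1 by ring]; ring

lemma Psi_tail {B q β : ℝ} (hB : 1 < B) (hq : 0 < q) (hβ : 0 < β) {T : ℝ} (hT : 0 < T) :
    ∫ x in {z : ℝ | T ≤ |z|}, Psi B q β x
      ≤ (q + 1/q) * exp (-(β * log B * (T - 1))) := by
  have hq' : (0:ℝ) < 1/q := by positivity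
  have hset : {z : ℝ | T ≤ |z|} = Iic (-T) ∪ Ici T := by
    ext z
    simp only [Set.mem_setOf_eq, Set.mem_union, Set.mem_Iic, Set.mem_Ici, le_abs]
    constructor
    · rintro (h | h); · right; exact h
      · left; linarith
    · rintro (h | h); · right; linarith
      · left; exact h
  have hdisj : Disjoint (Iic (-T)) (Ici T) := by
    rw [Set.disjoint_left]
    intro z hz hz'
    simp only [Set.mem_Iic] at hz
    simp only [Set.mem_Ici] at hz'
    linarith
  have hint := Psi_integrable hB hq hβ
  rw [hset, setIntegral_union hdisj measurableSet_Ici hint.integrableOn hint.integrableOn]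
  have hIic : ∫ x in Iic (-T), Psi B q β x = ∫ x in Ioi T, Psi B q β x := by
    rw [show (Ioi T) = Ioi (-(-T)) by norm_num, ← integral_comp_neg_Iic]
    exact setIntegral_congr_fun measurableSet_Iic (fun x _ => (Psi_neg hB hq x).symm)
  rw [hIic, integral_Ici_eq_integral_Ioi]
  have hPsiIoi : ∫ x in Ioi T, Psi B q β x
      = ((∫ x in Ioi T, G B q β x) + ∫ x in Ioi T, G B (1/q) β x) / 2 := by
    simp only [Psi]
    rw [integral_div, integral_add (G_integrableOn_Ioi hB hq hβ T)
      (G_integrableOn_Ioi hB hq' hβ T)]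
  have ht1 := G_tail hB hq hβ T
  have ht2 := G_tail hB hq' hβ T
  rw [hPsiIoi]
  have he : (0:ℝ) < exp (-(β * log B * (T - 1))) := exp_pos _
  nlinarith [ht1, ht2]


lemma key (B q β α : ℝ) (hB : 1 < B) (hq : 0 < q) (hβ : 0 < β)
    (hα0 : 0 < α) (hα1 : α < 1) (r : ℕ) (w : ℕ → ℝ)
    (hw : ∀ s ∈ Finset.Icc 1 r, 0 ≤ w s) (hw1 : ∑ s ∈ Finset.Icc 1 r, w s = 1)
    (f : ℝ → ℝ) (hf : Continuous f) (hfb : ∃ M : ℝ, ∀ x : ℝ, |f x| ≤ M)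
    (n : ℕ) (hn : 2 < (n : ℝ) ^ (1 - α)) (x : ℝ) :
    |opABar B q β r w n f x - f x| ≤
      modCont f (1 / (n : ℝ) + 1 / (n : ℝ) ^ α) +
        2 * (q + 1 / q) * supNorm f / B ^ (β * ((n : ℝ) ^ (1 - α) - 1)) := by
  obtain ⟨M0, hM0⟩ := hfb
  -- basic positivity
  have hB0 : (0:ℝ) < B := lt_trans one_pos hB
  have hc : 0 < β * log B := mul_pos hβ (log_pos hB)
  have hn1 : 1 ≤ n := by
    by_contra h
    push_neg at h
    interval_cases n
    rw [Nat.cast_zero, Real.zero_rpow (by linarith : 1 - α ≠ 0)] at hn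
    linarith
  have npos : (0:ℝ) < n := by exact_mod_cast hn1
  have hr1 : 1 ≤ r := by
    by_contra h
    push_neg at h
    interval_cases r
    simp at hw1
  have rpos : (0:ℝ) < r := by exact_mod_cast hr1
  -- sup norm facts
  have bddA : BddAbove (Set.range fun y : ℝ => |f y|) := by
    refine ⟨M0, ?_⟩
    rintro _ ⟨y, rfl⟩
    exact hM0 y
  have hMy : ∀ y : ℝ, |f y| ≤ supNorm f := fun y => le_ciSup bddA y
  have hsN : 0 ≤ supNorm f := le_trans (abs_nonneg _) (hMy 0)
  -- modulus of continuity facts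
  set θ : ℝ := 1 / (n : ℝ) + 1 / (n : ℝ) ^ α with hθdef
  have hθ0 : 0 ≤ θ := by positivity
  have bddS : BddAbove {d : ℝ | ∃ a b : ℝ, |a - b| ≤ θ ∧ d = |f a - f b|} := by
    refine ⟨2 * supNorm f, ?_⟩
    rintro d ⟨a, b, _, rfl⟩
    calc |f a - f b| ≤ |f a| + |f b| := abs_sub _ _
      _ ≤ 2 * supNorm f := by linarith [hMy a, hMy b]
  have hmem : ∀ a b : ℝ, |a - b| ≤ θ → |f a - f b| ≤ modCont f θ :=
    fun a b h => le_csSup bddS ⟨a, b, h, rfl⟩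
  have hω0 : 0 ≤ modCont f θ := by
    refine le_csSup bddS ⟨0, 0, by simpa using hθ0, by simp⟩
  -- notation
  set T : ℝ := (n : ℝ) ^ (1 - α) with hTdef
  have hT0 : 0 < T := by positivity
  set φ : ℝ → ℝ := fun v => Psi B q β ((n : ℝ) * x - v) with hφdef
  set g : ℝ → ℝ :=
    fun v => ∑ s ∈ Finset.Icc 1 r, w s * f (v / (n:ℝ) + (s : ℝ) / ((n : ℝ) * (r : ℝ)))
    with hgdef
  have hφint : Integrable φ :=
    (integrable_comp_sub_left (Psi B q β) ((n:ℝ) * x)).mpr (Psi_integrable hB hq hβ)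
  have hφnn : ∀ v, 0 ≤ φ v := fun v => Psi_nonneg hB hq hβ _
  have hφ1 : ∫ v, φ v = 1 := by
    rw [hφdef]
    rw [integral_sub_left_eq_self (Psi B q β) volume ((n:ℝ) * x)]
    exact Psi_integral_one hB hq hβ
  have hgc : Continuous g := by
    refine continuous_finset_sum _ fun s _ => continuous_const.mul ?_
    exact hf.comp ((continuous_id.div_const _).add continuous_const)
  have hgb : ∀ v, |g v| ≤ supNorm f := by
    intro v
    calc |g v| ≤ ∑ s ∈ Finset.Icc 1 r,
          |w s * f (v / (n:ℝ) + (s : ℝ) / ((n : ℝ) * (r : ℝ)))| :=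
        Finset.abs_sum_le_sum_abs _ _
      _ ≤ ∑ s ∈ Finset.Icc 1 r, w s * supNorm f := by
        refine Finset.sum_le_sum fun s hs => ?_
        rw [abs_mul, abs_of_nonneg (hw s hs)]
        exact mul_le_mul_of_nonneg_left (hMy _) (hw s hs)
      _ = supNorm f := by rw [← Finset.sum_mul, hw1, one_mul]
  have hgφ : Integrable (fun v => g v * φ v) :=
    hφint.bdd_mul hgc.aestronglyMeasurable
      (ae_of_all _ fun v => by rw [Real.norm_eq_abs]; exact hgb v)
  have hfφ : Integrable (fun v => f x * φ v) := hφint.const_mul (f x)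
  -- identity
  have hop : opABar B q β r w n f x - f x = ∫ v, (g v - f x) * φ v := by
    have : ∫ v, (g v - f x) * φ v = (∫ v, g v * φ v) - ∫ v, f x * φ v := by
      simp_rw [sub_mul]
      exact integral_sub hgφ hfφ
    rw [this, integral_const_mul, hφ1, mul_one]
    rfl
  have hint2 : Integrable (fun v => (g v - f x) * φ v) := by
    simp_rw [sub_mul]; exact hgφ.sub hfφ
  have habs : Integrable (fun v => |(g v - f x) * φ v|) := hint2.abs
  set sSet : Set ℝ := {v : ℝ | |(n:ℝ) * x - v| ≤ T} with hsdef
  have hms : MeasurableSet sSet :=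
    measurableSet_le ((measurable_const.sub measurable_id).abs) measurable_const
  -- bound on sSet
  have hball : ∀ v ∈ sSet, |(g v - f x) * φ v| ≤ modCont f θ * φ v := by
    intro v hv
    rw [abs_mul, abs_of_nonneg (hφnn v)]
    refine mul_le_mul_of_nonneg_right ?_ (hφnn v)
    have hvT : |(n:ℝ) * x - v| ≤ T := hv
    have hgx : g v - f x = ∑ s ∈ Finset.Icc 1 r,
        w s * (f (v / (n:ℝ) + (s : ℝ) / ((n : ℝ) * (r : ℝ))) - f x) := by
      simp_rw [mul_sub]
      rw [Finset.sum_sub_distrib, ← Finset.sum_mul, hw1, one_mul]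
    rw [hgx]
    calc |∑ s ∈ Finset.Icc 1 r,
          w s * (f (v / (n:ℝ) + (s : ℝ) / ((n : ℝ) * (r : ℝ))) - f x)|
        ≤ ∑ s ∈ Finset.Icc 1 r,
          |w s * (f (v / (n:ℝ) + (s : ℝ) / ((n : ℝ) * (r : ℝ))) - f x)| :=
        Finset.abs_sum_le_sum_abs _ _
      _ ≤ ∑ s ∈ Finset.Icc 1 r, w s * modCont f θ := by
        refine Finset.sum_le_sum fun s hs => ?_
        rw [abs_mul, abs_of_nonneg (hw s hs)]
        refine mul_le_mul_of_nonneg_left ?_ (hw s hs)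
        refine hmem _ _ ?_
        have hs1 : 1 ≤ s := (Finset.mem_Icc.mp hs).1
        have hsr : s ≤ r := (Finset.mem_Icc.mp hs).2
        have hsr' : (s:ℝ) ≤ (r:ℝ) := by exact_mod_cast hsr
        have hs0 : (0:ℝ) ≤ (s:ℝ) := by positivity
        have h1 : v / (n:ℝ) - x = (v - (n:ℝ)*x) / n := by field_simp
        have h2 : |v / (n:ℝ) - x| ≤ T / n := by
          rw [h1, abs_div, abs_of_pos npos, div_le_div_iff_of_pos_right npos]
          rw [abs_sub_comm]
          exact hvT
        have h3 : (s:ℝ) / ((n:ℝ) * (r:ℝ)) ≤ 1 / (n:ℝ) := by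
          rw [div_le_div_iff₀ (by positivity) npos]
          nlinarith
        have h4 : T / n = 1 / (n:ℝ) ^ α := by
          rw [hTdef, rpow_sub npos, rpow_one, div_div, mul_comm, ← div_div,
            div_self npos.ne']
        calc |v / (n:ℝ) + (s : ℝ) / ((n : ℝ) * (r : ℝ)) - x|
            ≤ |v / (n:ℝ) - x| + |(s : ℝ) / ((n : ℝ) * (r : ℝ))| := by
              rw [show v / (n:ℝ) + (s : ℝ) / ((n : ℝ) * (r : ℝ)) - x
                = (v / (n:ℝ) - x) + (s : ℝ) / ((n : ℝ) * (r : ℝ)) by ring]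
              exact abs_add_le _ _
          _ ≤ T / n + 1 / (n:ℝ) := by
              rw [abs_of_nonneg (by positivity : (0:ℝ) ≤ (s:ℝ) / ((n:ℝ)*(r:ℝ)))]
              linarith
          _ = θ := by rw [h4, hθdef]; ring
      _ = modCont f θ := by rw [← Finset.sum_mul, hw1, one_mul]
  -- bound off sSet
  have htail2 : ∀ v, |(g v - f x) * φ v| ≤ 2 * supNorm f * φ v := by
    intro v
    rw [abs_mul, abs_of_nonneg (hφnn v)]
    refine mul_le_mul_of_nonneg_right ?_ (hφnn v)
    calc |g v - f x| ≤ |g v| + |f x| := abs_sub _ _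
      _ ≤ 2 * supNorm f := by linarith [hgb v, hMy x]
  -- the tail integral
  have htailint : ∫ v in sSetᶜ, φ v
      ≤ (q + 1/q) * exp (-(β * log B * (T - 1))) := by
    have hsub : sSetᶜ ⊆ {v : ℝ | T ≤ |(n:ℝ) * x - v|} := by
      intro v hv
      simp only [hsdef, Set.mem_compl_iff, Set.mem_setOf_eq, not_le] at hv
      exact le_of_lt hv
    have hpre : {v : ℝ | T ≤ |(n:ℝ) * x - v|}
        = (fun v : ℝ => (n:ℝ) * x - v) ⁻¹' {z : ℝ | T ≤ |z|} := by
      ext v; simp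
    have mp : MeasurePreserving (fun v : ℝ => (n:ℝ) * x - v) volume volume :=
      Measure.measurePreserving_sub_left volume ((n:ℝ) * x)
    have emb : MeasurableEmbedding (fun v : ℝ => (n:ℝ) * x - v) :=
      (MeasurableEquiv.subLeft ((n:ℝ) * x)).measurableEmbedding
    have hmt : ∫ v in {v : ℝ | T ≤ |(n:ℝ) * x - v|}, φ v
        = ∫ z in {z : ℝ | T ≤ |z|}, Psi B q β z := by
      rw [hpre]
      exact mp.setIntegral_preimage_emb emb (Psi B q β) _
    calc ∫ v in sSetᶜ, φ v ≤ ∫ v in {v : ℝ | T ≤ |(n:ℝ) * x - v|}, φ v := by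
          refine setIntegral_mono_set hφint.integrableOn
            (ae_of_all _ hφnn) (HasSubset.Subset.eventuallyLE hsub)
      _ = ∫ z in {z : ℝ | T ≤ |z|}, Psi B q β z := hmt
      _ ≤ (q + 1/q) * exp (-(β * log B * (T - 1))) := Psi_tail hB hq hβ (by linarith)
  -- assemble
  have hsmall : ∫ v in sSet, |(g v - f x) * φ v| ≤ modCont f θ := by
    calc ∫ v in sSet, |(g v - f x) * φ v| ≤ ∫ v in sSet, modCont f θ * φ v :=
        setIntegral_mono_on habs.integrableOn
          ((hφint.const_mul (modCont f θ)).integrableOn) hms hball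
      _ = modCont f θ * ∫ v in sSet, φ v := integral_const_mul _ _
      _ ≤ modCont f θ * 1 := by
          refine mul_le_mul_of_nonneg_left ?_ hω0
          rw [← hφ1]
          exact setIntegral_le_integral hφint (ae_of_all _ hφnn)
      _ = modCont f θ := mul_one _
  have hbig : ∫ v in sSetᶜ, |(g v - f x) * φ v|
      ≤ 2 * supNorm f * ((q + 1/q) * exp (-(β * log B * (T - 1)))) := by
    calc ∫ v in sSetᶜ, |(g v - f x) * φ v| ≤ ∫ v in sSetᶜ, 2 * supNorm f * φ v :=
        setIntegral_mono_on habs.integrableOn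
          ((hφint.const_mul _).integrableOn) hms.compl (fun v _ => htail2 v)
      _ = 2 * supNorm f * ∫ v in sSetᶜ, φ v := integral_const_mul _ _
      _ ≤ 2 * supNorm f * ((q + 1/q) * exp (-(β * log B * (T - 1)))) := by
          refine mul_le_mul_of_nonneg_left htailint (by linarith)
  have hBpow : B ^ (β * (T - 1)) = exp (β * log B * (T - 1)) := by
    rw [rpow_def_of_pos hB0, show log B * (β * (T - 1)) = β * log B * (T - 1) by ring]
  have hfinal : 2 * (q + 1/q) * supNorm f / B ^ (β * (T - 1))
      = 2 * supNorm f * ((q + 1/q) * exp (-(β * log B * (T - 1)))) := by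
    rw [hBpow, exp_neg, div_eq_mul_inv]
    ring
  calc |opABar B q β r w n f x - f x| = |∫ v, (g v - f x) * φ v| := by rw [hop]
    _ ≤ ∫ v, |(g v - f x) * φ v| := by
        have h := norm_integral_le_integral_norm (μ := volume)
          (fun v => (g v - f x) * φ v)
        simp only [Real.norm_eq_abs] at h
        exact h
    _ = (∫ v in sSet, |(g v - f x) * φ v|) + ∫ v in sSetᶜ, |(g v - f x) * φ v| :=
        (integral_add_compl hms habs).symm
    _ ≤ modCont f θ + 2 * supNorm f * ((q + 1/q) * exp (-(β * log B * (T - 1)))) := by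
        linarith
    _ = modCont f θ + 2 * (q + 1/q) * supNorm f / B ^ (β * (T - 1)) := by
        rw [hfinal]


/-- quantitative approximation by the quadrature operator `Ā_n`
and uniform convergence. -/
theorem opABar_approx (B q β α : ℝ) (hB : 1 < B) (hq : 0 < q) (hβ : 0 < β)
    (hα0 : 0 < α) (hα1 : α < 1) (r : ℕ) (w : ℕ → ℝ)
    (hw : ∀ s ∈ Finset.Icc 1 r, 0 ≤ w s) (hw1 : ∑ s ∈ Finset.Icc 1 r, w s = 1)
    (f : ℝ → ℝ) (hf : Continuous f) (hfb : ∃ M : ℝ, ∀ x : ℝ, |f x| ≤ M) :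
    (∀ n : ℕ, 2 < (n : ℝ) ^ (1 - α) →
      (∀ x : ℝ, |opABar B q β r w n f x - f x| ≤
          modCont f (1 / (n : ℝ) + 1 / (n : ℝ) ^ α) +
            2 * (q + 1 / q) * supNorm f / B ^ (β * ((n : ℝ) ^ (1 - α) - 1))) ∧
      supNorm (fun x => opABar B q β r w n f x - f x) ≤
        modCont f (1 / (n : ℝ) + 1 / (n : ℝ) ^ α) +
          2 * (q + 1 / q) * supNorm f / B ^ (β * ((n : ℝ) ^ (1 - α) - 1))) ∧
    (UniformContinuous f →
      TendstoUniformly (fun (n : ℕ) (x : ℝ) => opABar B q β r w n f x) f atTop) := by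
  have hB0 : (0:ℝ) < B := lt_trans one_pos hB
  constructor
  · intro n hn
    have hpt := fun x => key B q β α hB hq hβ hα0 hα1 r w hw hw1 f hf hfb n hn x
    refine ⟨hpt, ?_⟩
    exact ciSup_le hpt
  · intro hUC
    rw [Metric.tendstoUniformly_iff]
    intro ε hε
    obtain ⟨δ, hδ0, hδ⟩ := Metric.uniformContinuous_iff.mp hUC (ε/4) (by linarith)
    have h12 : ((1:ℝ)/2) < 1 := by norm_num
    have h120 : (0:ℝ) < (1:ℝ)/2 := by norm_num
    have hroot : Tendsto (fun n : ℕ => (n:ℝ) ^ ((1:ℝ)/2)) atTop atTop :=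
      (tendsto_rpow_atTop h120).comp tendsto_natCast_atTop_atTop
    have hc : 0 < β * log B := mul_pos hβ (log_pos hB)
    have hlin : Tendsto (fun n : ℕ => log B * (β * ((n:ℝ) ^ ((1:ℝ)/2) - 1)))
        atTop atTop := by
      have h1 : Tendsto (fun n : ℕ => (n:ℝ) ^ ((1:ℝ)/2) - 1) atTop atTop :=
        tendsto_atTop_add_const_right atTop (-1) hroot
      have h2 : Tendsto (fun n : ℕ => β * ((n:ℝ) ^ ((1:ℝ)/2) - 1)) atTop atTop :=
        h1.const_mul_atTop hβ
      exact h2.const_mul_atTop (log_pos hB)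
    have hdenom : Tendsto (fun n : ℕ => B ^ (β * ((n:ℝ) ^ ((1:ℝ)/2) - 1)))
        atTop atTop := by
      have : (fun n : ℕ => B ^ (β * ((n:ℝ) ^ ((1:ℝ)/2) - 1)))
          = fun n : ℕ => exp (log B * (β * ((n:ℝ) ^ ((1:ℝ)/2) - 1))) := by
        funext n
        rw [rpow_def_of_pos hB0]
      rw [this]
      exact tendsto_exp_atTop.comp hlin
    have htail : Tendsto (fun n : ℕ =>
        2 * (q + 1/q) * supNorm f / B ^ (β * ((n:ℝ) ^ ((1:ℝ)/2) - 1)))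
        atTop (𝓝 0) :=
      hdenom.const_div_atTop (2 * (q + 1/q) * supNorm f)
    have e1 : ∀ᶠ n : ℕ in atTop,
        2 * (q + 1/q) * supNorm f / B ^ (β * ((n:ℝ) ^ ((1:ℝ)/2) - 1)) < ε/2 :=
      htail.eventually_lt_const (show (0:ℝ) < ε/2 by linarith)
    have e2 : ∀ᶠ n : ℕ in atTop, 2 < (n:ℝ) ^ ((1:ℝ)/2) :=
      hroot.eventually_gt_atTop 2
    have hθ0 : Tendsto (fun n : ℕ => 1/(n:ℝ) + 1/(n:ℝ) ^ ((1:ℝ)/2)) atTop (𝓝 0) := by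
      have t1 : Tendsto (fun n : ℕ => 1/(n:ℝ)) atTop (𝓝 0) :=
        tendsto_one_div_atTop_nhds_zero_nat
      have t2 : Tendsto (fun n : ℕ => 1/(n:ℝ) ^ ((1:ℝ)/2)) atTop (𝓝 0) := by
        exact hroot.inv_tendsto_atTop.congr (fun n => (one_div _).symm)
      simpa using t1.add t2
    have e3 : ∀ᶠ n : ℕ in atTop, 1/(n:ℝ) + 1/(n:ℝ) ^ ((1:ℝ)/2) < δ :=
      hθ0.eventually_lt_const (show (0:ℝ) < δ by linarith)
    filter_upwards [e1, e2, e3] with n hn1 hn2 hn3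
    intro x
    have hkey := key B q β ((1:ℝ)/2) hB hq hβ h120 h12 r w hw hw1 f hf hfb n
      (by rw [show (1:ℝ) - 1/2 = 1/2 by norm_num]; exact hn2) x
    rw [show (1:ℝ) - 1/2 = 1/2 by norm_num] at hkey
    have hmc : modCont f (1/(n:ℝ) + 1/(n:ℝ) ^ ((1:ℝ)/2)) ≤ ε/4 := by
      refine Real.sSup_le ?_ (by linarith)
      rintro d ⟨a, b, hab, rfl⟩
      have : dist a b < δ := by
        rw [Real.dist_eq]
        exact lt_of_le_of_lt hab hn3
      have := hδ this
      rw [Real.dist_eq] at this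
      linarith
    rw [dist_comm, Real.dist_eq]
    calc |opABar B q β r w n f x - f x|
        ≤ modCont f (1/(n:ℝ) + 1/(n:ℝ) ^ ((1:ℝ)/2)) +
          2 * (q + 1/q) * supNorm f / B ^ (β * ((n:ℝ) ^ ((1:ℝ)/2) - 1)) := hkey
      _ < ε := by linarith
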